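/- Suppose V has dimension 3 over ℝ. Then every element U of the Clifford algebra Cl(Q) satisfies the degree-4 characteristic polynomial identity (Cayley–Hamilton in Cl(Q)): writing Û = involute(U), Ũ = reverse(U), Û̃ = reverse(involute(U)), one has U⁴ = (U + Û + Ũ + Û̃)·U³ − (U·Ũ + U·Û + U·Û̃ + Û·Û̃ + Ũ·Û̃ + Û·Ũ)·U² + (U·Û·Û̃ + U·Ũ·Û̃ + U·Û·Ũ + Û·Ũ·Û̃)·U − U·Û·Ũ·Û̃. -/

import Mathlib

/-!
In an orthogonal basis `e₀, e₁, e₂` the Clifford conjugation `W ↦ reverse (involute W)` acts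
on monomials of grade `0, 1, 2, 3` by `+1, -1, -1, +1`, so `W + reverse (involute W)` is twice the
scalar-plus-pseudoscalar part of `W`; in dimension three `e₀e₁e₂` is central, hence so is
`W + reverse (involute W)`. Taking `W = U`, `W = involute U`, and using that
`involute U * reverse U` is fixed by the conjugation, `U` commutes with `reverse (involute U)`, with
`involute U + reverse U` and with `involute U * reverse U`; these three commutations are all the
noncommutative expansion of the quartic needs.
-/

open CliffordAlgebra

theorem pow_four_eq_of_commute {A : Type*} [Ring A] {u a b c : A}
    (hc : Commute u c) (hs : Commute u (a + b)) (hp : Commute u (a * b)) :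
    u ^ 4 =
      (u + a + b + c) * u ^ 3 - (u * b + u * a + u * c + a * c + b * c + a * b) * u ^ 2 +
        (u * a * c + u * b * c + u * a * b + a * b * c) * u - u * a * b * c := by
  linear_combination (norm := noncomm_ring) hs.eq * u ^ 2 + hc.eq * u ^ 2 - hs.eq * c * u -
    (a + b) * hc.eq * u - hp.eq * u + a * b * hc.eq + hp.eq * c

namespace CliffordAlgebra

variable {R M : Type*} [CommRing R] [AddCommGroup M] [Module R M] {Q : QuadraticForm R M}

theorem ι_mul_ι_mul_self (m : M) (x : CliffordAlgebra Q) : ι Q m * (ι Q m * x) = Q m • x := by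
  rw [← mul_assoc, ι_sq_scalar, Algebra.smul_def]

theorem mem_center_of_forall_commute_ι {ι' : Type*} {v : ι' → M}
    (hv : Submodule.span R (Set.range v) = ⊤) {z : CliffordAlgebra Q}
    (hz : ∀ i, Commute z (ι Q (v i))) : z ∈ Subalgebra.center R (CliffordAlgebra Q) := by
  have hι : LinearMap.mulRight R z ∘ₗ ι Q = LinearMap.mulLeft R z ∘ₗ ι Q :=
    LinearMap.ext_on_range hv fun i => (hz i).symm.eq
  refine Subalgebra.mem_center_iff.2 fun b => ?_
  induction b using CliffordAlgebra.induction with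
  | algebraMap r => exact Algebra.commutes r z
  | ι m => exact LinearMap.congr_fun hι m
  | mul a b ha hb => exact Commute.mul_left ha hb
  | add a b ha hb => exact Commute.add_left ha hb

section OrthogonalFamily

variable {ι' : Type*} [LinearOrder ι'] {e : ι' → M}

theorem ι_mul_ι_of_lt (he : Pairwise fun i j => Q.IsOrtho (e i) (e j)) {i j : ι'} (hij : i < j) :
    ι Q (e j) * ι Q (e i) = -(ι Q (e i) * ι Q (e j)) :=
  ι_mul_ι_comm_of_isOrtho (he hij.ne')

theorem ι_mul_ι_mul_of_lt (he : Pairwise fun i j => Q.IsOrtho (e i) (e j)) {i j : ι'}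
    (hij : i < j) (x : CliffordAlgebra Q) :
    ι Q (e j) * (ι Q (e i) * x) = -(ι Q (e i) * (ι Q (e j) * x)) :=
  ι_mul_ι_mul_of_isOrtho x (he hij.ne')

end OrthogonalFamily

section OrthogonalTriple

variable {e : Fin 3 → M}

def monomials₃ (Q : QuadraticForm R M) (e : Fin 3 → M) : Set (CliffordAlgebra Q) :=
  {1, ι Q (e 0), ι Q (e 1), ι Q (e 2), ι Q (e 0) * ι Q (e 1), ι Q (e 0) * ι Q (e 2),
    ι Q (e 1) * ι Q (e 2), ι Q (e 0) * (ι Q (e 1) * ι Q (e 2))}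

theorem ι_mul_mem_span_monomials₃ (he : Pairwise fun i j => Q.IsOrtho (e i) (e j)) (k : Fin 3)
    {x : CliffordAlgebra Q} (hx : x ∈ Submodule.span R (monomials₃ Q e)) :
    ι Q (e k) * x ∈ Submodule.span R (monomials₃ Q e) := by
  induction hx using Submodule.span_induction with
  | mem y hy =>
    simp only [monomials₃, Set.mem_insert_iff, Set.mem_singleton_iff] at hy
    rcases hy with rfl | rfl | rfl | rfl | rfl | rfl | rfl | rfl <;> fin_cases k <;>
      simp (disch := decide) only [Fin.zero_eta, Fin.mk_one, Fin.reduceFinMk, mul_one,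
        ι_mul_ι_of_lt he, ι_mul_ι_mul_of_lt he, ι_sq_scalar, Algebra.algebraMap_eq_smul_one,
        ι_mul_ι_mul_self, mul_neg, neg_neg, mul_smul_comm, neg_mem_iff]
    all_goals
      try apply Submodule.smul_mem
      exact Submodule.subset_span (by simp [monomials₃])
  | zero => simp
  | add a c _ _ ha hc => rw [mul_add]; exact add_mem ha hc
  | smul r a _ ha => rw [mul_smul_comm]; exact Submodule.smul_mem _ r ha

theorem span_monomials₃_eq_top (he : Pairwise fun i j => Q.IsOrtho (e i) (e j))
    (hspan : Submodule.span R (Set.range e) = ⊤) :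
    Submodule.span R (monomials₃ Q e) = ⊤ := by
  refine Submodule.eq_top_iff'.2 fun x => ?_
  suffices h : ∀ a, ∀ y ∈ Submodule.span R (monomials₃ Q e),
      a * y ∈ Submodule.span R (monomials₃ Q e) by
    simpa using h x 1 (Submodule.subset_span (by simp [monomials₃]))
  intro a
  induction a using CliffordAlgebra.induction with
  | algebraMap r => intro y hy; rw [← Algebra.smul_def]; exact Submodule.smul_mem _ r hy
  | ι m =>
    intro y hy
    have hm : m ∈ Submodule.span R (Set.range e) := hspan ▸ Submodule.mem_top
    induction hm using Submodule.span_induction with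
    | mem _ hv => obtain ⟨k, rfl⟩ := hv; exact ι_mul_mem_span_monomials₃ he k hy
    | zero => simp
    | add v w _ _ hv hw => rw [map_add, add_mul]; exact add_mem hv hw
    | smul r v _ hv => rw [map_smul, smul_mul_assoc]; exact Submodule.smul_mem _ r hv
  | mul a b ha hb => intro y hy; rw [mul_assoc]; exact ha _ (hb y hy)
  | add a b ha hb => intro y hy; rw [add_mul]; exact add_mem (ha y hy) (hb y hy)

theorem ι_mul_ι_mul_ι_mem_center (he : Pairwise fun i j => Q.IsOrtho (e i) (e j))
    (hspan : Submodule.span R (Set.range e) = ⊤) :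
    ι Q (e 0) * (ι Q (e 1) * ι Q (e 2)) ∈ Subalgebra.center R (CliffordAlgebra Q) := by
  refine mem_center_of_forall_commute_ι hspan fun k => ?_
  fin_cases k <;>
    simp (disch := decide) only [Commute, SemiconjBy, Fin.zero_eta, Fin.mk_one, Fin.reduceFinMk,
      mul_assoc, ι_mul_ι_of_lt he, ι_mul_ι_mul_of_lt he, ι_mul_ι_mul_self, mul_neg, neg_neg,
      mul_smul_comm]

theorem add_reverse_involute_mem_center_of_isOrtho
    (he : Pairwise fun i j => Q.IsOrtho (e i) (e j))
    (hspan : Submodule.span R (Set.range e) = ⊤) (W : CliffordAlgebra Q) :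
    W + reverse (involute W) ∈ Subalgebra.center R (CliffordAlgebra Q) := by
  have hW : W ∈ Submodule.span R (monomials₃ Q e) := by
    rw [span_monomials₃_eq_top he hspan]; trivial
  induction hW using Submodule.span_induction with
  | mem y hy =>
    simp only [monomials₃, Set.mem_insert_iff, Set.mem_singleton_iff] at hy
    rcases hy with rfl | rfl | rfl | rfl | rfl | rfl | rfl | rfl <;>
      simp (disch := decide) only [map_one, map_mul, reverse.map_one, reverse.map_mul, involute_ι,
        reverse_ι, map_neg, mul_neg, neg_mul, neg_neg, mul_assoc, ι_mul_ι_of_lt he,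
        ι_mul_ι_mul_of_lt he, add_neg_cancel]
    all_goals first
      | exact zero_mem _
      | exact add_mem (one_mem _) (one_mem _)
      | exact add_mem (ι_mul_ι_mul_ι_mem_center he hspan) (ι_mul_ι_mul_ι_mem_center he hspan)
  | zero => simp
  | add x y _ _ hx hy => rw [map_add, map_add, add_add_add_comm]; exact add_mem hx hy
  | smul r x _ hx => rw [map_smul, map_smul, ← smul_add]; exact Subalgebra.smul_mem _ hx r

end OrthogonalTriple

section Field

variable {K V : Type*} [Field K] [Invertible (2 : K)] [AddCommGroup V] [Module K V]
  {Q : QuadraticForm K V}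

theorem add_reverse_involute_mem_center (h : Module.finrank K V = 3) (W : CliffordAlgebra Q) :
    W + reverse (involute W) ∈ Subalgebra.center K (CliffordAlgebra Q) := by
  have : FiniteDimensional K V := Module.finite_of_finrank_eq_succ h
  obtain ⟨v, hv⟩ := LinearMap.BilinForm.exists_orthogonal_basis
    (B := QuadraticMap.associatedHom K Q) ⟨QuadraticMap.associated_isSymm K Q⟩
  let b := v.reindex (finCongr h)
  refine add_reverse_involute_mem_center_of_isOrtho (e := b)
    (fun i j hij => QuadraticMap.associated_isOrtho.1 ?_) b.span_eq W
  simpa [b] using hv ((finCongr h).symm.injective.ne hij)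

theorem mem_center_of_reverse_involute_eq (h : Module.finrank K V = 3) {W : CliffordAlgebra Q}
    (hW : reverse (involute W) = W) : W ∈ Subalgebra.center K (CliffordAlgebra Q) := by
  have h2W : (2 : K) • W ∈ Subalgebra.center K (CliffordAlgebra Q) := by
    simpa [two_smul, hW] using add_reverse_involute_mem_center h W
  simpa only [smul_smul, invOf_mul_self, one_smul] using Subalgebra.smul_mem _ h2W (⅟2 : K)

end Field

end CliffordAlgebra

theorem stmt_17 {V : Type*} [AddCommGroup V] [Module ℝ V] (Q : QuadraticForm ℝ V)
    (h : Module.finrank ℝ V = 3) (U : CliffordAlgebra Q) :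
    U ^ 4 =
      (U + involute U + reverse U + reverse (involute U)) * U ^ 3 -
        (U * reverse U + U * involute U + U * reverse (involute U) +
          involute U * reverse (involute U) + reverse U * reverse (involute U) +
          involute U * reverse U) * U ^ 2 +
        (U * involute U * reverse (involute U) + U * reverse U * reverse (involute U) +
          U * involute U * reverse U + involute U * reverse U * reverse (involute U)) * U -
        U * involute U * reverse U * reverse (involute U) := by
  have commute_of_mem_center {z : CliffordAlgebra Q} (hz : z ∈ Subalgebra.center ℝ _) :
      Commute U z :=
    Subalgebra.mem_center_iff.1 hz U
  refine pow_four_eq_of_commute ?_ ?_ ?_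
  · simpa using (commute_of_mem_center (add_reverse_involute_mem_center h U)).sub_right
      (Commute.refl U)
  · simpa [involute_involute] using
      commute_of_mem_center (add_reverse_involute_mem_center h (involute U))
  · refine commute_of_mem_center (mem_center_of_reverse_involute_eq h ?_)
    rw [map_mul, involute_involute, reverse.map_mul, reverse_involute, reverse_reverse]
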